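/- arXiv:2605.05430 — 5 statements merged into one kernel-verified Lean document; each statement's English description precedes it below -/
import Mathlib

section
/- Let λ₀, λ₁, c₀, c₁ > 0 with λ₀/c₀ ≠ λ₁/c₁, and a < b. Set μ = λ₀/c₀ − λ₁/c₁ and D = λ₀c₁·e^{μb} − λ₁c₀·e^{μa}, and assume D ≠ 0. The functions u₀(x) = (λ₀c₁·e^{μx} − λ₁c₀·e^{μa})/D and u₁(x) = (λ₁c₀·e^{μx} − λ₁c₀·e^{μa})/D satisfy u₀′(x) = −(λ₀/c₀)(u₁(x) − u₀(x)) and u₁′(x) = −(λ₁/c₁)(u₁(x) − u₀(x)) on [a,b], together with u₀(b) = 1 and u₁(a) = 0. -/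
open Real

lemma hasDerivAt_mul_exp_sub_div (k m C D x : ℝ) :
    HasDerivAt (fun x => (k * exp (m * x) - C) / D) (k * m * exp (m * x) / D) x := by
  have hexp : HasDerivAt (fun x => exp (m * x)) (exp (m * x) * m) x :=
    (hasDerivAt_exp _).comp x ((hasDerivAt_id x).const_mul m |>.congr_deriv (mul_one m))
  exact ((hexp.const_mul k).sub_const C).div_const D |>.congr_deriv (by ring)

theorem stmt_9_general (l0 l1 c0 c1 a b : ℝ) (hc0 : 0 < c0) (hc1 : 0 < c1)
    (mu D : ℝ) (hmu : mu = l0 / c0 - l1 / c1)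
    (hD : D = l0 * c1 * Real.exp (mu * b) - l1 * c0 * Real.exp (mu * a)) (hD0 : D ≠ 0)
    (u0 u1 : ℝ → ℝ)
    (hu0 : u0 = fun x => (l0 * c1 * Real.exp (mu * x) - l1 * c0 * Real.exp (mu * a)) / D)
    (hu1 : u1 = fun x => (l1 * c0 * Real.exp (mu * x) - l1 * c0 * Real.exp (mu * a)) / D) :
    (∀ x ∈ Set.Icc a b, HasDerivAt u0 (-(l0 / c0) * (u1 x - u0 x)) x) ∧
    (∀ x ∈ Set.Icc a b, HasDerivAt u1 (-(l1 / c1) * (u1 x - u0 x)) x) ∧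
    u0 b = 1 ∧ u1 a = 0 := by
  have hdiff : ∀ x, u1 x - u0 x = (l1 * c0 - l0 * c1) * exp (mu * x) / D := by
    intro x
    rw [hu0, hu1]
    ring
  refine ⟨fun x _ => ?_, fun x _ => ?_, ?_, by simp [hu1]⟩
  · rw [hdiff, hu0]
    refine (hasDerivAt_mul_exp_sub_div _ _ _ _ x).congr_deriv ?_
    rw [hmu]
    field_simp
    ring
  · rw [hdiff, hu1]
    refine (hasDerivAt_mul_exp_sub_div _ _ _ _ x).congr_deriv ?_
    rw [hmu]
    field_simp
    ring
  · simp only [hu0, ← hD, div_self hD0]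

theorem stmt_9 (l0 l1 c0 c1 a b : ℝ) (hl0 : 0 < l0) (hl1 : 0 < l1) (hc0 : 0 < c0) (hc1 : 0 < c1)
    (hne : l0 / c0 ≠ l1 / c1) (hab : a < b)
    (mu D : ℝ) (hmu : mu = l0 / c0 - l1 / c1)
    (hD : D = l0 * c1 * Real.exp (mu * b) - l1 * c0 * Real.exp (mu * a)) (hD0 : D ≠ 0)
    (u0 u1 : ℝ → ℝ)
    (hu0 : u0 = fun x => (l0 * c1 * Real.exp (mu * x) - l1 * c0 * Real.exp (mu * a)) / D)
    (hu1 : u1 = fun x => (l1 * c0 * Real.exp (mu * x) - l1 * c0 * Real.exp (mu * a)) / D) :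
    (∀ x ∈ Set.Icc a b, HasDerivAt u0 (-(l0 / c0) * (u1 x - u0 x)) x) ∧
    (∀ x ∈ Set.Icc a b, HasDerivAt u1 (-(l1 / c1) * (u1 x - u0 x)) x) ∧
    u0 b = 1 ∧ u1 a = 0 :=
  stmt_9_general l0 l1 c0 c1 a b hc0 hc1 mu D hmu hD hD0 u0 u1 hu0 hu1
end

section
/- Fix a < b, x ∈ [a,b], and μ ∈ ℝ with μ ≠ 0. Consider sequences λ₀ⁿ, λ₁ⁿ, c₀ⁿ, c₁ⁿ → +∞ with λ₀ⁿ/(c₀ⁿ)² → 1, λ₁ⁿ/(c₁ⁿ)² → 1 and (1/2)(λ₁ⁿ/c₁ⁿ − λ₀ⁿ/c₀ⁿ) → μ. Then uₙ(x) := (1/2)·((λ₁ⁿc₀ⁿ + λ₀ⁿc₁ⁿ)·e^{μₙ x} − 2λ₁ⁿc₀ⁿ·e^{μₙ a})/(λ₀ⁿc₁ⁿ·e^{μₙ b} − λ₁ⁿc₀ⁿ·e^{μₙ a}), where μₙ = λ₀ⁿ/c₀ⁿ − λ₁ⁿ/c₁ⁿ, converges to (e^{−2μx} − e^{−2μa})/(e^{−2μb}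 − e^{−2μa}). -/
/-!
Write `ρₙ = λ₁ⁿc₀ⁿ / (λ₀ⁿc₁ⁿ)`. Dividing numerator and denominator by `λ₀ⁿc₁ⁿ` turns `uₙ(x)` into
`(½(ρₙ + 1)e^{μₙx} - ρₙe^{μₙa}) / (e^{μₙb} - ρₙe^{μₙa})`, a function continuous in `(ρₙ, μₙ)` away
from `a = b` and `μₙ = 0`. Now `μₙ → -2μ` by hypothesis, and `ρₙ → 1` because
`ρₙ = (λ₁ⁿ/c₁ⁿ) / (λ₀ⁿ/c₀ⁿ)` where the two speeds differ by a bounded amount while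
`λ₀ⁿ/c₀ⁿ = (λ₀ⁿ/(c₀ⁿ)²) c₀ⁿ → ∞`.
-/

open Filter Topology

lemma tendsto_div_atTop_of_div_sq_tendsto {α : Type*} {l : Filter α} {f c : α → ℝ} {r : ℝ}
    (hr : 0 < r) (hc : Tendsto c l atTop) (hfc : Tendsto (fun n => f n / c n ^ 2) l (𝓝 r)) :
    Tendsto (fun n => f n / c n) l atTop := by
  refine (hfc.pos_mul_atTop hr hc).congr' ?_
  filter_upwards [hc.eventually_gt_atTop 0] with n hn
  field_simp

lemma tendsto_div_nhds_one_of_tendsto_sub {α : Type*} {l : Filter α} {p q : α → ℝ} {L : ℝ}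
    (hp : Tendsto p l atTop) (hqp : Tendsto (fun n => q n - p n) l (𝓝 L)) :
    Tendsto (fun n => q n / p n) l (𝓝 1) := by
  have h := (hqp.div_atTop hp).const_add 1
  rw [add_zero] at h
  refine h.congr' ?_
  filter_upwards [hp.eventually_gt_atTop 0] with n hn
  field_simp
  ring

noncomputable def normalizedExitProb (ρ m a b x : ℝ) : ℝ :=
  ((1 / 2) * (ρ + 1) * Real.exp (m * x) - ρ * Real.exp (m * a)) /
    (Real.exp (m * b) - ρ * Real.exp (m * a))

lemma exitProb_eq_normalizedExitProb {l0 c1 : ℝ} (hl0 : l0 ≠ 0) (hc1 : c1 ≠ 0)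
    (l1 c0 m a b x : ℝ) :
    (1 / 2) * ((l1 * c0 + l0 * c1) * Real.exp (m * x) - 2 * l1 * c0 * Real.exp (m * a)) /
        (l0 * c1 * Real.exp (m * b) - l1 * c0 * Real.exp (m * a)) =
      normalizedExitProb (l1 * c0 / (l0 * c1)) m a b x := by
  rw [normalizedExitProb]
  field_simp

lemma tendsto_normalizedExitProb {α : Type*} {l : Filter α} {ρ m : α → ℝ} {μ a b : ℝ}
    (hρ : Tendsto ρ l (𝓝 1)) (hm : Tendsto m l (𝓝 μ)) (hμ : μ ≠ 0) (hab : a ≠ b) (x : ℝ) :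
    Tendsto (fun n => normalizedExitProb (ρ n) (m n) a b x) l
      (𝓝 ((Real.exp (μ * x) - Real.exp (μ * a)) / (Real.exp (μ * b) - Real.exp (μ * a)))) := by
  have hexp : ∀ y : ℝ, Tendsto (fun n => Real.exp (m n * y)) l (𝓝 (Real.exp (μ * y))) :=
    fun y => (Real.continuous_exp.tendsto _).comp (hm.mul_const y)
  have hden : Real.exp (μ * b) - 1 * Real.exp (μ * a) ≠ 0 := by
    rw [one_mul, sub_ne_zero, Ne, Real.exp_eq_exp, mul_right_inj' hμ]
    exact hab.symm
  have h := (((((tendsto_const_nhds (x := (1 / 2 : ℝ))).mul (hρ.add_const 1)).mul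
    (hexp x)).sub (hρ.mul (hexp a))).div ((hexp b).sub (hρ.mul (hexp a))) hden)
  rwa [one_mul, show (1 / 2 : ℝ) * (1 + 1) = 1 by norm_num, one_mul] at h

theorem stmt_11_general (a b x mu : ℝ) (hab : a < b) (hmu : mu ≠ 0)
    (l0 l1 c0 c1 : ℕ → ℝ)
    (hl0 : Tendsto l0 atTop atTop)
    (hc0 : Tendsto c0 atTop atTop) (hc1 : Tendsto c1 atTop atTop)
    (hr0 : Tendsto (fun n => l0 n / (c0 n) ^ 2) atTop (nhds 1))
    (hdrift : Tendsto (fun n => (1 / 2) * (l1 n / c1 n - l0 n / c0 n)) atTop (nhds mu)) :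
    Tendsto (fun n =>
        (1 / 2) * ((l1 n * c0 n + l0 n * c1 n) * Real.exp ((l0 n / c0 n - l1 n / c1 n) * x)
          - 2 * l1 n * c0 n * Real.exp ((l0 n / c0 n - l1 n / c1 n) * a)) /
        (l0 n * c1 n * Real.exp ((l0 n / c0 n - l1 n / c1 n) * b)
          - l1 n * c0 n * Real.exp ((l0 n / c0 n - l1 n / c1 n) * a)))
      atTop
      (nhds ((Real.exp (-2 * mu * x) - Real.exp (-2 * mu * a)) /
        (Real.exp (-2 * mu * b) - Real.exp (-2 * mu * a)))) := by
  have hm : Tendsto (fun n => l0 n / c0 n - l1 n / c1 n) atTop (𝓝 (-2 * mu)) :=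
    (hdrift.const_mul (-2)).congr fun n => by ring
  have hρ : Tendsto (fun n => l1 n * c0 n / (l0 n * c1 n)) atTop (𝓝 1) := by
    have hspeed := tendsto_div_atTop_of_div_sq_tendsto one_pos hc0 hr0
    have hgap : Tendsto (fun n => l1 n / c1 n - l0 n / c0 n) atTop (𝓝 (2 * mu)) :=
      (hdrift.const_mul 2).congr fun n => by ring
    refine (tendsto_div_nhds_one_of_tendsto_sub hspeed hgap).congr fun n => ?_
    rw [div_div_div_eq, mul_comm (c1 n)]
  refine (tendsto_normalizedExitProb hρ hm (by simpa using hmu) hab.ne x).congr' ?_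
  filter_upwards [hl0.eventually_gt_atTop 0, hc1.eventually_gt_atTop 0] with n hl hc
  exact (exitProb_eq_normalizedExitProb hl.ne' hc.ne' _ _ _ a b x).symm

theorem stmt_11 (a b x mu : ℝ) (hab : a < b) (hx : x ∈ Set.Icc a b) (hmu : mu ≠ 0)
    (l0 l1 c0 c1 : ℕ → ℝ)
    (hl0 : Tendsto l0 atTop atTop) (hl1 : Tendsto l1 atTop atTop)
    (hc0 : Tendsto c0 atTop atTop) (hc1 : Tendsto c1 atTop atTop)
    (hr0 : Tendsto (fun n => l0 n / (c0 n) ^ 2) atTop (nhds 1))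
    (hr1 : Tendsto (fun n => l1 n / (c1 n) ^ 2) atTop (nhds 1))
    (hdrift : Tendsto (fun n => (1 / 2) * (l1 n / c1 n - l0 n / c0 n)) atTop (nhds mu)) :
    Tendsto (fun n =>
        (1 / 2) * ((l1 n * c0 n + l0 n * c1 n) * Real.exp ((l0 n / c0 n - l1 n / c1 n) * x)
          - 2 * l1 n * c0 n * Real.exp ((l0 n / c0 n - l1 n / c1 n) * a)) /
        (l0 n * c1 n * Real.exp ((l0 n / c0 n - l1 n / c1 n) * b)
          - l1 n * c0 n * Real.exp ((l0 n / c0 n - l1 n / c1 n) * a)))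
      atTop
      (nhds ((Real.exp (-2 * mu * x) - Real.exp (-2 * mu * a)) /
        (Real.exp (-2 * mu * b) - Real.exp (-2 * mu * a)))) :=
  stmt_11_general a b x mu hab hmu l0 l1 c0 c1 hl0 hc0 hc1 hr0 hdrift
end

section
/- Let λ, c > 0 and L > 0. The functions h₁(y) = λy(L−y)/c² + 2(L−y)/c and h₃(y) = λy(L−y)/c² + 2y/c satisfy h₁′(y) = −(λ/(2c))(h₃(y) − h₁(y)) − 2/c and h₃′(y) = −(λ/(2c))(h₃(y) − h₁(y)) + 2/c on [0,L], with boundary conditions h₁(L) = 0 and h₃(0) = 0. -/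
theorem stmt_15 (lam c L : ℝ) (hlam : 0 < lam) (hc : 0 < c) (hL : 0 < L)
    (h1 h3 : ℝ → ℝ)
    (hh1 : h1 = fun y => lam * (y * (L - y)) / c ^ 2 + 2 * (L - y) / c)
    (hh3 : h3 = fun y => lam * (y * (L - y)) / c ^ 2 + 2 * y / c) :
    (∀ y ∈ Set.Icc 0 L, HasDerivAt h1 (-(lam / (2 * c)) * (h3 y - h1 y) - 2 / c) y) ∧
    (∀ y ∈ Set.Icc 0 L, HasDerivAt h3 (-(lam / (2 * c)) * (h3 y - h1 y) + 2 / c) y) ∧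
    h1 L = 0 ∧ h3 0 = 0 := by
  have hc' : c ≠ 0 := ne_of_gt hc
  subst hh1 hh3
  refine ⟨fun y _ => ?_, fun y _ => ?_, by simp, by simp⟩
  · have h : HasDerivAt (fun y : ℝ => lam * (y * (L - y)) / c ^ 2 + 2 * (L - y) / c)
        ((lam * (1 * (L - y) + y * (0 - 1))) / c ^ 2 + (2 * (0 - 1)) / c) y := by
      exact (((hasDerivAt_id y).mul ((hasDerivAt_const y L).sub (hasDerivAt_id y))).const_mul
        lam |>.div_const _).add (((hasDerivAt_const y L).sub (hasDerivAt_id y)).const_mul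
        2 |>.div_const _)
    convert h using 1
    field_simp
    ring
  · have h : HasDerivAt (fun y : ℝ => lam * (y * (L - y)) / c ^ 2 + 2 * y / c)
        ((lam * (1 * (L - y) + y * (0 - 1))) / c ^ 2 + (2 * 1) / c) y := by
      exact (((hasDerivAt_id y).mul ((hasDerivAt_const y L).sub (hasDerivAt_id y))).const_mul
        lam |>.div_const _).add ((hasDerivAt_id y).const_mul 2 |>.div_const _)
    convert h using 1
    field_simp
    ring
end

section
/- Let λ, c, L > 0, α ∈ ℝ with α ≠ 0, and set s = √(λ² + α²c²) and θ = |α|λ/s. Define, for y ∈ [0,L], f₁(y) = 2λ²·sinh(θ(L−y)) / ((s + |α|c)²·e^{θL} − (s − |α|c)²·e^{−θL}) and f₃(y) = ((s + |α|c)²·e^{θ(L−y)} − (s − |α|c)²·e^{−θ(L−y)}) / ((s + |α|c)²·e^{θL} − (s − |α|c)²·e^{−θL}). Then f₁′(y) = ((λ³ + 2λc²α²)/(2cs²))·f₁(y) − (λ³/(2cs²))·f₃(y) and f₃′(y) = (λ³/(2cs²))·f₁(y) − ((λ³ + 2λc²α²)/(2cs²))·f₃(y), with f₁(L) = 0 and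 f₃(0) = 1. -/
/-!
Both functions are combinations of `exp (θ (L - y))` and `exp (-θ (L - y))`, so the system
reduces to two eigenvector equations for its coefficient matrix `[[a, -b], [b, -a]]`, where
`a = (λ³ + 2λc²α²)/(2cs²)` and `b = λ³/(2cs²)`: `(λ², (s + βc)²)` is an eigenvector for the
eigenvalue `-βλ/s` whenever `β² = α²`, and `β = ±|α|` gives the two eigenvalues `∓θ`.
Both equations follow from `(s + βc)(s - βc) = s² - α²c² = λ²`.
-/

open Real

lemma hasDerivAt_exp_mul_sub (θ L y : ℝ) :
    HasDerivAt (fun z => exp (θ * (L - z))) (-θ * exp (θ * (L - y))) y := by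
  refine (((hasDerivAt_id y).const_sub L).const_mul θ).exp.congr_deriv ?_
  simp only [id]
  ring

lemma hasDerivAt_exp_neg_mul_sub (θ L y : ℝ) :
    HasDerivAt (fun z => exp (-(θ * (L - z)))) (θ * exp (-(θ * (L - y)))) y := by
  simpa only [neg_mul, neg_neg] using hasDerivAt_exp_mul_sub (-θ) L y

lemma hasDerivAt_system_of_eigen {e₁ e₂ : ℝ → ℝ} {a b θ d p₁ q₁ p₂ q₂ y : ℝ}
    (he₁ : HasDerivAt e₁ (-θ * e₁ y) y) (he₂ : HasDerivAt e₂ (θ * e₂ y) y)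
    (hp₁ : a * p₁ - b * q₁ = -θ * p₁) (hq₁ : b * p₁ - a * q₁ = -θ * q₁)
    (hp₂ : a * p₂ - b * q₂ = θ * p₂) (hq₂ : b * p₂ - a * q₂ = θ * q₂) :
    HasDerivAt (fun z => (p₁ * e₁ z - p₂ * e₂ z) / d)
        (a * ((p₁ * e₁ y - p₂ * e₂ y) / d) - b * ((q₁ * e₁ y - q₂ * e₂ y) / d)) y ∧
      HasDerivAt (fun z => (q₁ * e₁ z - q₂ * e₂ z) / d)
        (b * ((p₁ * e₁ y - p₂ * e₂ y) / d) - a * ((q₁ * e₁ y - q₂ * e₂ y) / d)) y := by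
  constructor
  · refine (((he₁.const_mul p₁).sub (he₂.const_mul p₂)).div_const d).congr_deriv ?_
    linear_combination (-e₁ y / d) * hp₁ + (e₂ y / d) * hp₂
  · refine (((he₁.const_mul q₁).sub (he₂.const_mul q₂)).div_const d).congr_deriv ?_
    linear_combination (-e₁ y / d) * hq₁ + (e₂ y / d) * hq₂

section Eigen

variable {lam c α β s : ℝ}

lemma eigen_row_fst (hc : c ≠ 0) (hs : s ≠ 0)
    (hs2 : s ^ 2 = lam ^ 2 + α ^ 2 * c ^ 2) (hβ : β ^ 2 = α ^ 2) :
    (lam ^ 3 + 2 * lam * c ^ 2 * α ^ 2) / (2 * c * s ^ 2) * lam ^ 2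
      - lam ^ 3 / (2 * c * s ^ 2) * (s + β * c) ^ 2 = -(β * lam / s) * lam ^ 2 := by
  field_simp
  linear_combination (-lam ^ 3) * hs2 - lam ^ 3 * c ^ 2 * hβ

lemma eigen_row_snd (hc : c ≠ 0) (hs : s ≠ 0)
    (hs2 : s ^ 2 = lam ^ 2 + α ^ 2 * c ^ 2) (hβ : β ^ 2 = α ^ 2) :
    lam ^ 3 / (2 * c * s ^ 2) * lam ^ 2
      - (lam ^ 3 + 2 * lam * c ^ 2 * α ^ 2) / (2 * c * s ^ 2) * (s + β * c) ^ 2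
      = -(β * lam / s) * (s + β * c) ^ 2 := by
  field_simp
  linear_combination lam * ((s + β * c) ^ 2 - (lam ^ 2 + s ^ 2 - c ^ 2 * β ^ 2)) * hs2
    + lam * c ^ 2 * (lam ^ 2 + s ^ 2 - c ^ 2 * β ^ 2 + (s + β * c) ^ 2) * hβ

end Eigen

lemma mul_exp_sub_mul_exp_neg_pos {A B x : ℝ} (hB : 0 ≤ B) (hBA : B < A) (hx : 0 ≤ x) :
    0 < A * exp x - B * exp (-x) := by
  have hB' : B * exp (-x) ≤ B := mul_le_of_le_one_right hB (exp_le_one_iff.mpr (by linarith))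
  have hA' : A ≤ A * exp x := le_mul_of_one_le_right (by linarith) (one_le_exp hx)
  linarith

theorem stmt_18 (lam c L α : ℝ) (hlam : 0 < lam) (hc : 0 < c) (hL : 0 < L) (hα : α ≠ 0)
    (s θ : ℝ) (hs : s = Real.sqrt (lam ^ 2 + α ^ 2 * c ^ 2)) (hθ : θ = |α| * lam / s)
    (den : ℝ)
    (hden : den = (s + |α| * c) ^ 2 * Real.exp (θ * L) - (s - |α| * c) ^ 2 * Real.exp (-(θ * L)))
    (f1 f3 : ℝ → ℝ)
    (hf1 : f1 = fun y => 2 * lam ^ 2 * Real.sinh (θ * (L - y)) / den)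
    (hf3 : f3 = fun y => ((s + |α| * c) ^ 2 * Real.exp (θ * (L - y))
        - (s - |α| * c) ^ 2 * Real.exp (-(θ * (L - y)))) / den) :
    (∀ y ∈ Set.Icc 0 L,
      HasDerivAt f1 ((lam ^ 3 + 2 * lam * c ^ 2 * α ^ 2) / (2 * c * s ^ 2) * f1 y
        - lam ^ 3 / (2 * c * s ^ 2) * f3 y) y) ∧
    (∀ y ∈ Set.Icc 0 L,
      HasDerivAt f3 (lam ^ 3 / (2 * c * s ^ 2) * f1 y
        - (lam ^ 3 + 2 * lam * c ^ 2 * α ^ 2) / (2 * c * s ^ 2) * f3 y) y) ∧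
    f1 L = 0 ∧ f3 0 = 1 := by
  have hpos : 0 < lam ^ 2 + α ^ 2 * c ^ 2 := by positivity
  have hs0 : 0 < s := hs ▸ sqrt_pos.mpr hpos
  have hs2 : s ^ 2 = lam ^ 2 + α ^ 2 * c ^ 2 := hs ▸ sq_sqrt hpos.le
  have hneg : (-|α|) ^ 2 = α ^ 2 := by rw [neg_sq, sq_abs]
  have hf1' : f1 = fun z =>
      (lam ^ 2 * exp (θ * (L - z)) - lam ^ 2 * exp (-(θ * (L - z)))) / den := by
    rw [hf1]; funext z; rw [sinh_eq]; ring
  have hsys (y : ℝ) := hasDerivAt_system_of_eigen (d := den)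
    (p₁ := lam ^ 2) (q₁ := (s + |α| * c) ^ 2) (p₂ := lam ^ 2) (q₂ := (s - |α| * c) ^ 2)
    (hasDerivAt_exp_mul_sub θ L y) (hasDerivAt_exp_neg_mul_sub θ L y)
    (hθ ▸ eigen_row_fst hc.ne' hs0.ne' hs2 (sq_abs α))
    (hθ ▸ eigen_row_snd hc.ne' hs0.ne' hs2 (sq_abs α))
    (by rw [hθ]; linear_combination eigen_row_fst hc.ne' hs0.ne' hs2 hneg)
    (by rw [hθ]; linear_combination eigen_row_snd hc.ne' hs0.ne' hs2 hneg)
  have hden0 : 0 < den := hden ▸ mul_exp_sub_mul_exp_neg_pos (sq_nonneg _)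
    (by nlinarith [mul_pos (mul_pos (abs_pos.mpr hα) hc) hs0]) (by rw [hθ]; positivity)
  refine ⟨fun y _ => ?_, fun y _ => ?_, ?_, ?_⟩
  · rw [hf1', hf3]; exact (hsys y).1
  · rw [hf1', hf3]; exact (hsys y).2
  · simp [hf1]
  · simp only [hf3, sub_zero, ← hden]
    exact div_self hden0.ne'
end

section
/- Let λ, c, L > 0 and set s(α) = √(λ² + α²c²), θ(α) = |α|λ/s(α) for α ∈ ℝ. For fixed y ∈ (0,L), the function f₃(α, y) = ((s+|α|c)²·e^{θ(L−y)} − (s−|α|c)²·e^{−θ(L−y)}) / ((s+|α|c)²·e^{θL} − (s−|α|c)²·e^{−θL}) tends to e^{−λy/c} as |α| → +∞. -/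
open Filter Topology Real

/-!
With `a = |α| c` and `s = √(λ² + a²)` one has `(s - a)(s + a) = λ²`, so `q = ((s - a)/(s + a))²`
tends to `0`, while `θ → λ / c`. Dividing numerator and denominator by `(s + a)² e^{θL}` turns
`f₃` into `(e^{-θy} - q e^{-θ(2L-y)}) / (1 - q e^{-2θL})`, whose limit is `e^{-λy/c}`.
-/

theorem tendsto_mul_div_sqrt_add_sq_mul_sq {c : ℝ} (hc : 0 < c) (a b : ℝ) :
    Tendsto (fun x : ℝ => x * b / √(a + x ^ 2 * c ^ 2)) atTop (𝓝 (b / c)) := by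
  have hroot : Tendsto (fun x : ℝ => √(a / x ^ 2 + c ^ 2)) atTop (𝓝 c) := by
    have h := ((tendsto_const_nhds (x := a)).div_atTop
      (tendsto_pow_atTop two_ne_zero)).add_const (c ^ 2)
    simpa [sqrt_sq hc.le] using h.sqrt
  refine (tendsto_const_nhds.div hroot hc.ne').congr' ?_
  filter_upwards [eventually_gt_atTop 0] with x hx
  rw [Pi.div_apply, show a + x ^ 2 * c ^ 2 = x ^ 2 * (a / x ^ 2 + c ^ 2) by field_simp,
    sqrt_mul (sq_nonneg x), sqrt_sq hx.le, mul_div_mul_left _ _ hx.ne']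

theorem tendsto_sqrt_sub_div_sqrt_add {a c : ℝ} (ha : 0 ≤ a) (hc : 0 < c) :
    Tendsto (fun x : ℝ => (√(a + x ^ 2 * c ^ 2) - x * c) / (√(a + x ^ 2 * c ^ 2) + x * c))
      atTop (𝓝 0) := by
  have hsum : Tendsto (fun x : ℝ => √(a + x ^ 2 * c ^ 2) + x * c) atTop atTop :=
    tendsto_atTop_mono (fun x => le_add_of_nonneg_left (sqrt_nonneg _))
      (tendsto_id.atTop_mul_const hc)
  refine (tendsto_const_nhds (x := a)).div_atTop (hsum.atTop_mul_atTop₀ hsum) |>.congr' ?_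
  filter_upwards [hsum.eventually_gt_atTop 0] with x hx
  have hsq : √(a + x ^ 2 * c ^ 2) ^ 2 = a + x ^ 2 * c ^ 2 := sq_sqrt (by positivity)
  rw [div_eq_div_iff (mul_pos hx hx).ne' hx.ne']
  linear_combination -(√(a + x ^ 2 * c ^ 2) + x * c) * hsq

theorem sq_mul_exp_sub_div_eq (A B t L y : ℝ) (hA : A ≠ 0) :
    (A ^ 2 * exp (t * (L - y)) - B ^ 2 * exp (-(t * (L - y)))) /
        (A ^ 2 * exp (t * L) - B ^ 2 * exp (-(t * L))) =
      (exp (-(t * y)) - (B / A) ^ 2 * exp (-(t * (2 * L - y)))) /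
        (1 - (B / A) ^ 2 * exp (-(2 * (t * L)))) := by
  have hk : A ^ 2 * exp (t * L) ≠ 0 := by positivity
  have e1 : exp (t * (L - y)) = exp (t * L) * exp (-(t * y)) := by rw [← exp_add]; ring_nf
  have e2 : exp (-(t * (L - y))) = exp (t * L) * exp (-(t * (2 * L - y))) := by
    rw [← exp_add]; ring_nf
  have e3 : exp (-(t * L)) = exp (t * L) * exp (-(2 * (t * L))) := by rw [← exp_add]; ring_nf
  rw [← div_div_div_cancel_right₀ hk, e1, e2, e3]
  congr 1 <;> field_simp

theorem tendsto_exp_sub_mul_exp_div_one_sub {ι : Type*} {l : Filter ι} {t q : ι → ℝ} {t₀ : ℝ}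
    (ht : Tendsto t l (𝓝 t₀)) (hq : Tendsto q l (𝓝 0)) (L y : ℝ) :
    Tendsto (fun i => (exp (-(t i * y)) - q i * exp (-(t i * (2 * L - y)))) /
        (1 - q i * exp (-(2 * (t i * L))))) l (𝓝 (exp (-(t₀ * y)))) := by
  have hnum := ((ht.mul_const y).neg.rexp).sub (hq.mul ((ht.mul_const (2 * L - y)).neg.rexp))
  have hden := tendsto_const_nhds (x := (1 : ℝ)).sub
    (hq.mul ((ht.mul_const L).const_mul 2).neg.rexp)
  simpa [Pi.div_def] using hnum.div hden (by simp)

theorem stmt_19_general (lam c L y : ℝ) (hc : 0 < c)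
    (s θ : ℝ → ℝ)
    (hs : s = fun α => Real.sqrt (lam ^ 2 + α ^ 2 * c ^ 2))
    (hθ : θ = fun α => |α| * lam / s α)
    (f3 : ℝ → ℝ)
    (hf3 : f3 = fun α =>
      ((s α + |α| * c) ^ 2 * Real.exp (θ α * (L - y))
        - (s α - |α| * c) ^ 2 * Real.exp (-(θ α * (L - y)))) /
      ((s α + |α| * c) ^ 2 * Real.exp (θ α * L)
        - (s α - |α| * c) ^ 2 * Real.exp (-(θ α * L)))) :
    Tendsto f3 (comap (fun α : ℝ => |α|) atTop) (nhds (Real.exp (-(lam * y / c)))) := by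
  have habs : Tendsto (fun α : ℝ => |α|) (comap (fun α : ℝ => |α|) atTop) atTop := tendsto_comap
  have hs' : s = fun α => √(lam ^ 2 + |α| ^ 2 * c ^ 2) := by simp only [hs, sq_abs]
  have hθlim : Tendsto θ (comap (fun α : ℝ => |α|) atTop) (𝓝 (lam / c)) := by
    rw [hθ, hs']
    exact (tendsto_mul_div_sqrt_add_sq_mul_sq hc _ lam).comp habs
  have hratio : Tendsto (fun α => ((s α - |α| * c) / (s α + |α| * c)) ^ 2)
      (comap (fun α : ℝ => |α|) atTop) (𝓝 0) := by
    rw [hs']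
    simpa using ((tendsto_sqrt_sub_div_sqrt_add (sq_nonneg lam) hc).comp habs).pow 2
  rw [show lam * y / c = lam / c * y by ring]
  refine (tendsto_exp_sub_mul_exp_div_one_sub hθlim hratio L y).congr' ?_
  filter_upwards [habs.eventually_gt_atTop 0] with α hα
  have hsum : s α + |α| * c ≠ 0 := by
    rw [hs]; positivity
  rw [hf3]
  exact (sq_mul_exp_sub_div_eq _ _ _ _ _ hsum).symm

theorem stmt_19 (lam c L y : ℝ) (hlam : 0 < lam) (hc : 0 < c) (hL : 0 < L)
    (hy : y ∈ Set.Ioo 0 L)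
    (s θ : ℝ → ℝ)
    (hs : s = fun α => Real.sqrt (lam ^ 2 + α ^ 2 * c ^ 2))
    (hθ : θ = fun α => |α| * lam / s α)
    (f3 : ℝ → ℝ)
    (hf3 : f3 = fun α =>
      ((s α + |α| * c) ^ 2 * Real.exp (θ α * (L - y))
        - (s α - |α| * c) ^ 2 * Real.exp (-(θ α * (L - y)))) /
      ((s α + |α| * c) ^ 2 * Real.exp (θ α * L)
        - (s α - |α| * c) ^ 2 * Real.exp (-(θ α * L)))) :
    Tendsto f3 (comap (fun α : ℝ => |α|) atTop) (nhds (Real.exp (-(lam * y / c)))) :=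
  stmt_19_general lam c L y hc s θ hs hθ f3 hf3
end
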